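/- arXiv:2107.01895 — 6 statements merged into one kernel-verified Lean document; each statement's English description precedes it below -/
import Mathlib

section
/- Lemma 2 (bounding the variance of SGD under client sampling): let H be a real inner product space, S a finite index set with |S| = N ≥ 2, 1 ≤ b ≤ N, and G > 0. If x_i ∈ H satisfy ‖x_i‖² ≤ G² for every i ∈ S, and x̄ = (1/N)∑_{i∈S} x_i, then (1/C(N,b)) · ∑_{P ⊆ S, |P| = b} ‖(1/b)∑_{i∈P} x_i − x̄‖² ≤ 2·((N−b)/(N−1))·(G²/b). -/
open Finset

lemma count_subset' {ι : Type*} [Fintype ι] [DecidableEq ι] (b : ℕ) (t : Finset ι) (htb : t.card ≤ b) :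
    (((Finset.univ : Finset ι).powersetCard b).filter (fun P => t ⊆ P)).card
      = (Fintype.card ι - t.card).choose (b - t.card) := by
  have h1 : ((Finset.univ : Finset ι) \ t).card = Fintype.card ι - t.card := by
    rw [Finset.card_sdiff_of_subset (Finset.subset_univ t), Finset.card_univ]
  rw [← h1, ← Finset.card_powersetCard (b - t.card) ((Finset.univ : Finset ι) \ t)]
  apply Finset.card_bij' (fun P _ => P \ t) (fun Q _ => Q ∪ t)
  · intro P hP
    simp only [Finset.mem_filter, Finset.mem_powersetCard] at hP ⊢
    obtain ⟨⟨_, hPc⟩, htP⟩ := hP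
    exact ⟨Finset.sdiff_subset_sdiff (Finset.subset_univ P) le_rfl,
      by rw [Finset.card_sdiff_of_subset htP, hPc]⟩
  · intro Q hQ
    rw [Finset.mem_powersetCard] at hQ
    obtain ⟨hQs, hQc⟩ := hQ
    have hdisj : Disjoint Q t := Finset.disjoint_of_subset_left hQs (Finset.sdiff_disjoint)
    simp only [Finset.mem_filter, Finset.mem_powersetCard]
    refine ⟨⟨Finset.subset_univ _, ?_⟩, Finset.subset_union_right⟩
    rw [Finset.card_union_of_disjoint hdisj, hQc]
    omega
  · intro P hP
    simp only [Finset.mem_filter] at hP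
    exact Finset.sdiff_union_of_subset hP.2
  · intro Q hQ
    rw [Finset.mem_powersetCard] at hQ
    have hdisj : Disjoint Q t := Finset.disjoint_of_subset_left hQ.1 (Finset.sdiff_disjoint)
    rw [Finset.union_sdiff_right, Finset.sdiff_eq_self_of_disjoint hdisj]

/-- **Lemma 2 (bounding the variance of SGD under client sampling):** let `H` be a real inner
product space, `ι` a finite index set with `|ι| = N ≥ 2`, `1 ≤ b ≤ N`, and `G > 0`. If
`‖x i‖² ≤ G²` for every `i` and `x̄ = (1/N) • ∑ i, x i`, then the average over all `C(N,b)`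
subsets `P` of size `b` of `‖(1/b) • ∑_{i∈P} x i − x̄‖²` is at most
`2·((N−b)/(N−1))·(G²/b)`. -/
theorem sgd_variance_bound_client_sampling
    {H : Type*} [NormedAddCommGroup H] [InnerProductSpace ℝ H]
    {ι : Type*} [Fintype ι] [DecidableEq ι] (N b : ℕ)
    (hcard : Fintype.card ι = N) (hN2 : 2 ≤ N) (hb1 : 1 ≤ b) (hbN : b ≤ N)
    (G : ℝ) (hG : 0 < G) (x : ι → H) (hx : ∀ i, ‖x i‖ ^ 2 ≤ G ^ 2) :
    ((N.choose b : ℝ))⁻¹ *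
      ∑ P ∈ Finset.powersetCard b (Finset.univ : Finset ι),
        ‖((b : ℝ))⁻¹ • (∑ i ∈ P, x i) - ((N : ℝ))⁻¹ • (∑ i : ι, x i)‖ ^ 2
    ≤ 2 * (((N : ℝ) - (b : ℝ)) / ((N : ℝ) - 1)) * (G ^ 2 / (b : ℝ)) := by
  have hN0 : (0:ℝ) < N := by positivity
  have hb0 : (0:ℝ) < b := by exact_mod_cast hb1
  set xbar : H := ((N : ℝ))⁻¹ • (∑ i : ι, x i) with hxbar
  set y : ι → H := fun i => x i - xbar with hy
  have hNx : (N:ℝ) • xbar = ∑ i : ι, x i := by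
    rw [hxbar, smul_smul, mul_inv_cancel₀ (ne_of_gt hN0), one_smul]
  have hysum : ∑ i : ι, y i = 0 := by
    simp only [hy, Finset.sum_sub_distrib, Finset.sum_const, Finset.card_univ, hcard]
    rw [← Nat.cast_smul_eq_nsmul ℝ, hNx, sub_self]
  set g : ι → ι → ℝ := fun i j => inner ℝ (y i) (y j) with hg
  set An : ℕ := (N-1).choose (b-1) with hAn
  set Bn : ℕ := if b ≤ 1 then 0 else (N-2).choose (b-2) with hBn
  set C : ℕ := N.choose b with hC
  have hC0 : (0:ℝ) < C := by
    have := Nat.choose_pos hbN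
    exact_mod_cast this
  -- counts
  have hcount1 : ∀ i : ι, (((Finset.univ : Finset ι).powersetCard b).filter
      (fun P => i ∈ P ∧ i ∈ P)).card = An := by
    intro i
    have h := count_subset' (ι := ι) b {i} (by simpa using hb1)
    simp only [Finset.card_singleton, hcard] at h
    rw [hAn, ← h]
    congr 1
    apply Finset.filter_congr
    intro P _
    simp
  have hcount2 : ∀ i j : ι, i ≠ j → (((Finset.univ : Finset ι).powersetCard b).filter
      (fun P => i ∈ P ∧ j ∈ P)).card = Bn := by
    intro i j hij
    rcases le_or_gt b 1 with hb' | hb'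
    · rw [hBn, if_pos hb']
      rw [Finset.card_eq_zero, Finset.filter_eq_empty_iff]
      intro P hP
      rw [Finset.mem_powersetCard] at hP
      intro ⟨hiP, hjP⟩
      have hsub : ({i, j} : Finset ι) ⊆ P := by
        intro k hk; simp at hk; rcases hk with rfl | rfl <;> assumption
      have h2 : ({i,j} : Finset ι).card = 2 := Finset.card_pair hij
      have := Finset.card_le_card hsub
      omega
    · have hc2 : ({i,j} : Finset ι).card = 2 := Finset.card_pair hij
      have h := count_subset' (ι := ι) b {i,j} (by omega)
      simp only [hc2, hcard] at h
      rw [hBn, if_neg (by omega), ← h]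
      congr 1
      apply Finset.filter_congr
      intro P _
      simp [Finset.insert_subset_iff]
  -- choose identities over ℝ
  have hAC : (N:ℝ) * An = (b:ℝ) * C := by
    have h := Nat.add_one_mul_choose_eq (N-1) (b-1)
    have h1 : N - 1 + 1 = N := by omega
    have h2 : b - 1 + 1 = b := by omega
    rw [h1, h2] at h
    have hnat : N * An = b * C := by rw [hAn, hC, Nat.mul_comm b]; exact h
    exact_mod_cast hnat
  have hBA : ((N:ℝ) - 1) * Bn = ((b:ℝ) - 1) * An := by
    rcases le_or_gt b 1 with hb' | hb'
    · have hb1' : b = 1 := le_antisymm hb' hb1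
      rw [hBn, if_pos hb', hb1']
      push_cast
      ring
    · have h := Nat.add_one_mul_choose_eq (N-2) (b-2)
      have h1 : N - 2 + 1 = N - 1 := by omega
      have h2 : b - 2 + 1 = b - 1 := by omega
      rw [h1, h2] at h
      have hnat : (N-1) * Bn = (b-1) * An := by
        rw [hBn, if_neg (by omega), hAn, Nat.mul_comm (b-1)]; exact h
      have hcast : ((N:ℝ) - 1) = ((N-1 : ℕ) : ℝ) := by
        rw [Nat.cast_sub (by omega)]; norm_num
      have hcast2 : ((b:ℝ) - 1) = ((b-1 : ℕ) : ℝ) := by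
        rw [Nat.cast_sub hb1]; norm_num
      rw [hcast, hcast2]
      exact_mod_cast hnat
  set T : ℝ := ∑ i : ι, g i i with hT
  -- Z = 0
  have hZ : ∑ i : ι, ∑ j : ι, g i j = 0 := by
    simp only [hg]
    simp_rw [← inner_sum]
    rw [← sum_inner, hysum, inner_zero_left]
  -- main sum computation
  have hsum : ∑ P ∈ Finset.powersetCard b (Finset.univ : Finset ι),
      ‖((b : ℝ))⁻¹ • (∑ i ∈ P, x i) - xbar‖ ^ 2
      = ((b:ℝ)⁻¹)^2 * (((An:ℝ) - Bn) * T) := by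
    have step1 : ∀ P ∈ Finset.powersetCard b (Finset.univ : Finset ι),
        ‖((b : ℝ))⁻¹ • (∑ i ∈ P, x i) - xbar‖ ^ 2
        = ((b:ℝ)⁻¹)^2 * ∑ i ∈ P, ∑ j ∈ P, g i j := by
      intro P hP
      rw [Finset.mem_powersetCard] at hP
      have hyP : ∑ i ∈ P, y i = ∑ i ∈ P, x i - (b:ℝ) • xbar := by
        simp only [hy, Finset.sum_sub_distrib, Finset.sum_const, hP.2,
          ← Nat.cast_smul_eq_nsmul ℝ]
      have heq : ((b : ℝ))⁻¹ • (∑ i ∈ P, x i) - xbar = ((b : ℝ))⁻¹ • ∑ i ∈ P, y i := by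
        rw [hyP, smul_sub, smul_smul, inv_mul_cancel₀ (ne_of_gt hb0), one_smul]
      rw [heq, norm_smul, mul_pow, Real.norm_eq_abs, abs_of_nonneg (by positivity),
        ← real_inner_self_eq_norm_sq, sum_inner]
      simp_rw [inner_sum]
      rfl
    rw [Finset.sum_congr rfl step1, ← Finset.mul_sum]
    congr 1
    -- swap sums: each inner double sum as sum over univ with indicators
    have step2 : ∀ P : Finset ι, ∑ i ∈ P, ∑ j ∈ P, g i j
        = ∑ i : ι, ∑ j : ι, (if i ∈ P ∧ j ∈ P then g i j else 0) := by
      intro P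
      have : ∀ i : ι, (∑ j : ι, if i ∈ P ∧ j ∈ P then g i j else 0)
          = if i ∈ P then ∑ j ∈ P, g i j else 0 := by
        intro i
        by_cases hi : i ∈ P
        · rw [if_pos hi]
          trans (∑ j ∈ Finset.univ ∩ P, g i j)
          · rw [← Finset.sum_ite_mem]
            apply Finset.sum_congr rfl
            intro j _
            simp [hi]
          · rw [Finset.univ_inter]
        · rw [if_neg hi]
          apply Finset.sum_eq_zero
          intro j _
          simp [hi]
      simp_rw [this]
      rw [Finset.sum_ite_mem Finset.univ P, Finset.univ_inter]
    simp_rw [step2]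
    rw [Finset.sum_comm]
    have step3 : ∀ i : ι, ∑ P ∈ Finset.powersetCard b (Finset.univ : Finset ι),
        ∑ j : ι, (if i ∈ P ∧ j ∈ P then g i j else 0)
        = ∑ j : ι, ∑ P ∈ Finset.powersetCard b (Finset.univ : Finset ι),
          (if i ∈ P ∧ j ∈ P then g i j else 0) := fun i => Finset.sum_comm
    simp_rw [step3]
    have step4 : ∀ i j : ι, ∑ P ∈ Finset.powersetCard b (Finset.univ : Finset ι),
        (if i ∈ P ∧ j ∈ P then g i j else 0)
        = ((((Finset.univ : Finset ι).powersetCard b).filter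
            (fun P => i ∈ P ∧ j ∈ P)).card : ℝ) * g i j := by
      intro i j
      rw [← Finset.sum_filter, Finset.sum_const, nsmul_eq_mul]
    simp_rw [step4]
    have step5 : ∀ i j : ι, ((((Finset.univ : Finset ι).powersetCard b).filter
          (fun P => i ∈ P ∧ j ∈ P)).card : ℝ) * g i j
        = (Bn:ℝ) * g i j + (if i = j then ((An:ℝ) - Bn) * g i j else 0) := by
      intro i j
      by_cases hij : i = j
      · subst hij
        rw [hcount1 i, if_pos rfl]
        ring
      · rw [hcount2 i j hij, if_neg hij]
        ring
    simp_rw [step5, Finset.sum_add_distrib, ← Finset.mul_sum]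
    rw [hZ, mul_zero, zero_add]
    have step6 : ∀ i : ι, ∑ j : ι, (if i = j then ((An:ℝ) - Bn) * g i j else 0)
        = ((An:ℝ) - Bn) * g i i := by
      intro i
      simp
    simp_rw [step6, ← Finset.mul_sum]
    rfl
  -- bound on T
  have hT0 : 0 ≤ T := Finset.sum_nonneg fun i _ => real_inner_self_nonneg
  have hinner : ∑ i : ι, (inner ℝ (x i) xbar : ℝ) = (N:ℝ) * ‖xbar‖^2 := by
    rw [← sum_inner, ← hNx, real_inner_smul_left, real_inner_self_eq_norm_sq]
  have hTexp : T = (∑ i : ι, ‖x i‖^2) - (N:ℝ) * ‖xbar‖^2 := by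
    have : ∀ i : ι, g i i = ‖x i‖^2 - 2 * inner ℝ (x i) xbar + ‖xbar‖^2 := by
      intro i
      show (inner ℝ (y i) (y i) : ℝ) = _
      rw [real_inner_self_eq_norm_sq, hy]
      exact norm_sub_sq_real (x i) xbar
    rw [hT]
    simp_rw [this]
    rw [Finset.sum_add_distrib, Finset.sum_sub_distrib, ← Finset.mul_sum, hinner,
      Finset.sum_const, Finset.card_univ, hcard, nsmul_eq_mul]
    ring
  have hTbound : T ≤ (N:ℝ) * G^2 := by
    have h1 : ∑ i : ι, ‖x i‖^2 ≤ (N:ℝ) * G^2 := by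
      calc ∑ i : ι, ‖x i‖^2 ≤ ∑ _i : ι, G^2 := Finset.sum_le_sum fun i _ => hx i
        _ = (N:ℝ) * G^2 := by
          rw [Finset.sum_const, Finset.card_univ, hcard, nsmul_eq_mul]
    have h2 : 0 ≤ (N:ℝ) * ‖xbar‖^2 := by positivity
    linarith [hTexp]
  -- final arithmetic
  rw [hsum]
  have hNb : (b:ℝ) ≤ N := by exact_mod_cast hbN
  have hN1 : (1:ℝ) < N := by exact_mod_cast hN2
  have hNe1 : (N:ℝ) - 1 ≠ 0 := by linarith
  have hfrac : ((C:ℝ))⁻¹ * (((b:ℝ)⁻¹)^2 * (((An:ℝ) - Bn) * T))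
      = T * (((N:ℝ) - b) / ((N:ℝ) * ((N:ℝ) - 1) * b)) := by
    field_simp
    linear_combination (T * ((N:ℝ) - b)) * hAC - (T * (N:ℝ)) * hBA
  rw [hfrac]
  have hfin : ((N:ℝ) * G^2) * (((N:ℝ) - b) / ((N:ℝ) * ((N:ℝ) - 1) * b))
      = (((N:ℝ) - b) / ((N:ℝ) - 1)) * (G^2 / b) := by
    field_simp
  have hXnn : 0 ≤ (((N:ℝ) - b) / ((N:ℝ) - 1)) * (G^2 / b) := by
    apply mul_nonneg
    · apply div_nonneg <;> linarith
    · positivity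
  have step1 : T * (((N:ℝ) - b) / ((N:ℝ) * ((N:ℝ) - 1) * b))
      ≤ ((N:ℝ) * G^2) * (((N:ℝ) - b) / ((N:ℝ) * ((N:ℝ) - 1) * b)) := by
    apply mul_le_mul_of_nonneg_right hTbound
    apply div_nonneg
    · linarith
    · have : (0:ℝ) < (N:ℝ) * ((N:ℝ) - 1) * b := mul_pos (mul_pos hN0 (by linarith)) hb0
      linarith
  calc T * (((N:ℝ) - b) / ((N:ℝ) * ((N:ℝ) - 1) * b))
      ≤ ((N:ℝ) * G^2) * (((N:ℝ) - b) / ((N:ℝ) * ((N:ℝ) - 1) * b)) := step1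
    _ = (((N:ℝ) - b) / ((N:ℝ) - 1)) * (G^2 / b) := hfin
    _ ≤ 2 * (((N:ℝ) - b) / ((N:ℝ) - 1)) * (G^2 / b) := by linarith
end

section
/- Lemma 3 (one-step upper bound for FedSGD): under the smoothness, strong-convexity and minimizer hypotheses below, for every θ ∈ H and every step size η with 0 < η ≤ 1/λ, ‖θ − η·∑_{i=1}^N β_i g_i(θ) − θ*‖² ≤ (1 − μη)·‖θ − θ*‖² + 2λη²·Γ. -/
open RealInnerProductSpace

/-- **Lemma 3 (one-step upper bound for FedSGD):** with `N` clients of weights `β i ≥ 0`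
summing to `1`, losses `F i` that are `λ`-smooth and `μ`-strongly convex (with gradient maps
`g i`, `0 < μ ≤ λ`), a global minimizer `θ*` of `F = ∑ i, β i * F i`, lower bounds
`F i* ≤ F i x`, and non-iid degree `Γ = F(θ*) − ∑ i, β i * F i*`, for every `θ ∈ H` and step
size `0 < η ≤ 1/λ` we have
`‖θ − η • ∑ i, β i • g i θ − θ*‖² ≤ (1 − μη)·‖θ − θ*‖² + 2λη²·Γ`. -/
theorem fedSGD_one_step_bound
    {H : Type*} [NormedAddCommGroup H] [InnerProductSpace ℝ H]
    (N : ℕ) (hN : 1 ≤ N)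
    (β : Fin N → ℝ) (hβ : ∀ i, 0 ≤ β i) (hβsum : ∑ i, β i = 1)
    (F : Fin N → H → ℝ) (g : Fin N → H → H)
    (μ lam : ℝ) (hμ : 0 < μ) (hμlam : μ ≤ lam)
    (hsmooth : ∀ i x y, F i y ≤ F i x + ⟪g i x, y - x⟫ + lam / 2 * ‖y - x‖ ^ 2)
    (hconv : ∀ i x y, F i y ≥ F i x + ⟪g i x, y - x⟫ + μ / 2 * ‖y - x‖ ^ 2)
    (θstar : H) (hθstar : ∀ x, ∑ i, β i * F i θstar ≤ ∑ i, β i * F i x)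
    (Fstar : Fin N → ℝ) (hFstar : ∀ i x, Fstar i ≤ F i x)
    (Γ : ℝ) (hΓ : Γ = (∑ i, β i * F i θstar) - ∑ i, β i * Fstar i)
    (θ : H) (η : ℝ) (hη0 : 0 < η) (hη : η ≤ 1 / lam) :
    ‖θ - η • (∑ i, β i • g i θ) - θstar‖ ^ 2
      ≤ (1 - μ * η) * ‖θ - θstar‖ ^ 2 + 2 * lam * η ^ 2 * Γ := by
  have hlam : 0 < lam := lt_of_lt_of_le hμ hμlam
  have hηlam : lam * η ≤ 1 := by
    have := (le_div_iff₀ hlam).mp hη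
    linarith
  set D := θ - θstar with hD
  set G := ∑ i, β i • g i θ with hG
  have hkey : θ - η • G - θstar = D - η • G := by rw [hD]; abel
  have hA : (0:ℝ) ≤ ∑ i, β i * F i θ - ∑ i, β i * F i θstar := by
    have := hθstar θ; linarith
  -- (A) lower bound on the inner product
  have hinner : ∑ i, β i * F i θ - ∑ i, β i * F i θstar + μ/2 * ‖D‖^2 ≤ ⟪G, D⟫ := by
    have h1 : ⟪G, D⟫ = ∑ i, β i * ⟪g i θ, D⟫ := by
      rw [hG, sum_inner]
      exact Finset.sum_congr rfl fun i _ => real_inner_smul_left _ _ _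
    have h2 : ∑ i, β i * (F i θ - F i θstar + μ/2 * ‖D‖^2)
        ≤ ∑ i, β i * ⟪g i θ, D⟫ := by
      apply Finset.sum_le_sum
      intro i _
      apply mul_le_mul_of_nonneg_left _ (hβ i)
      have h := hconv i θ θstar
      have e1 : ⟪g i θ, θstar - θ⟫ = -⟪g i θ, D⟫ := by
        rw [hD, ← inner_neg_right]; congr 1; abel
      have e2 : ‖θstar - θ‖ = ‖D‖ := by rw [hD, ← norm_neg]; congr 1; abel
      rw [e1, e2] at h
      linarith
    have h3 : ∑ i, β i * (F i θ - F i θstar + μ/2 * ‖D‖^2)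
        = ∑ i, β i * F i θ - ∑ i, β i * F i θstar + μ/2 * ‖D‖^2 := by
      simp only [mul_add, mul_sub]
      rw [Finset.sum_add_distrib, Finset.sum_sub_distrib]
      have : ∑ i, β i * (μ/2 * ‖D‖^2) = (∑ i, β i) * (μ/2 * ‖D‖^2) :=
        (Finset.sum_mul _ _ _).symm
      rw [this, hβsum, one_mul]
    rw [h1]; linarith
  -- (B) per-client gradient norm bound
  have hB : ∀ i, ‖g i θ‖^2 ≤ 2 * lam * (F i θ - Fstar i) := by
    intro i
    have h := hsmooth i θ (θ - (1/lam) • g i θ)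
    have e1 : θ - (1/lam) • g i θ - θ = -((1/lam) • g i θ) := by abel
    rw [e1] at h
    have e2 : ⟪g i θ, -((1/lam) • g i θ)⟫ = -(1/lam) * ‖g i θ‖^2 := by
      rw [inner_neg_right, real_inner_smul_right, real_inner_self_eq_norm_sq]; ring
    have e3 : ‖-((1/lam) • g i θ)‖^2 = (1/lam)^2 * ‖g i θ‖^2 := by
      rw [norm_neg, norm_smul, Real.norm_eq_abs,
        abs_of_pos (by positivity : (0:ℝ) < 1/lam), mul_pow]
    rw [e2, e3] at h
    have h2 := hFstar i (θ - (1/lam) • g i θ)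
    have hl : lam ≠ 0 := ne_of_gt hlam
    have e4 : lam / 2 * ((1/lam)^2 * ‖g i θ‖^2) = 1/(2*lam) * ‖g i θ‖^2 := by
      field_simp
    rw [e4] at h
    have e5 : -(1/lam) * ‖g i θ‖^2 + 1/(2*lam) * ‖g i θ‖^2
        = -(1/(2*lam) * ‖g i θ‖^2) := by field_simp; ring
    have h3 : 1/(2*lam) * ‖g i θ‖^2 ≤ F i θ - Fstar i := by linarith
    have := mul_le_mul_of_nonneg_left h3 (by positivity : (0:ℝ) ≤ 2*lam)
    calc ‖g i θ‖^2 = 2*lam * (1/(2*lam) * ‖g i θ‖^2) := by field_simp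
      _ ≤ 2 * lam * (F i θ - Fstar i) := this
  -- (C) Jensen: ‖G‖² ≤ ∑ β i ‖g i θ‖²
  have hC : ‖G‖^2 ≤ ∑ i, β i * ‖g i θ‖^2 := by
    have h1 : ‖G‖ ≤ ∑ i, β i * ‖g i θ‖ := by
      refine (norm_sum_le _ _).trans (Finset.sum_le_sum fun i _ => ?_)
      rw [norm_smul, Real.norm_eq_abs, abs_of_nonneg (hβ i)]
    have h2 : (∑ i, β i * ‖g i θ‖)^2 ≤ ∑ i, β i * ‖g i θ‖^2 := by
      have cs := Finset.sum_mul_sq_le_sq_mul_sq Finset.univ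
        (fun i => Real.sqrt (β i)) (fun i => Real.sqrt (β i) * ‖g i θ‖)
      have e1 : ∀ i : Fin N, Real.sqrt (β i) * (Real.sqrt (β i) * ‖g i θ‖)
          = β i * ‖g i θ‖ := by
        intro i; rw [← mul_assoc, Real.mul_self_sqrt (hβ i)]
      have e2 : ∀ i : Fin N, (Real.sqrt (β i))^2 = β i := fun i => Real.sq_sqrt (hβ i)
      have e3 : ∀ i : Fin N, (Real.sqrt (β i) * ‖g i θ‖)^2 = β i * ‖g i θ‖^2 := by
        intro i; rw [mul_pow, e2]
      simp only [e1, e2, e3] at cs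
      rwa [hβsum, one_mul] at cs
    calc ‖G‖^2 ≤ (∑ i, β i * ‖g i θ‖)^2 :=
          pow_le_pow_left₀ (norm_nonneg _) h1 2
      _ ≤ _ := h2
  have hC2 : ‖G‖^2 ≤ 2 * lam * (∑ i, β i * F i θ - ∑ i, β i * Fstar i) := by
    refine hC.trans ?_
    have : ∑ i, β i * ‖g i θ‖^2 ≤ ∑ i, β i * (2 * lam * (F i θ - Fstar i)) :=
      Finset.sum_le_sum fun i _ => mul_le_mul_of_nonneg_left (hB i) (hβ i)
    refine this.trans (le_of_eq ?_)
    rw [mul_sub, Finset.mul_sum, Finset.mul_sum, ← Finset.sum_sub_distrib]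
    exact Finset.sum_congr rfl fun i _ => by ring
  -- expansion
  have hexp : ‖D - η • G‖^2 = ‖D‖^2 - 2*η*⟪G, D⟫ + η^2*‖G‖^2 := by
    rw [norm_sub_sq_real, real_inner_smul_right, real_inner_comm, norm_smul,
      Real.norm_eq_abs, abs_of_pos hη0, mul_pow]
    ring
  subst hΓ
  rw [hkey, hexp]
  have hfin : (0:ℝ) ≤ η * (1 - lam * η) * (∑ i, β i * F i θ - ∑ i, β i * F i θstar) :=
    mul_nonneg (mul_nonneg hη0.le (by linarith)) hA
  have hsq : (0:ℝ) ≤ η^2 := sq_nonneg η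
  nlinarith [mul_le_mul_of_nonneg_left hinner (by linarith : (0:ℝ) ≤ 2*η),
    mul_le_mul_of_nonneg_left hC2 hsq]
end

section
/- Diminishing-stepsize recursion lemma (the key induction in the proofs of Theorems 3 and 4): let μ > 0, α > 1/μ, γ ≥ αμ, ω ≥ 0, and let Y : ℕ → ℝ satisfy Y(t+1) ≤ (1 − αμ/(t+γ))·Y(t) + α²ω/(t+γ)² for every t ∈ ℕ. Then for every t ∈ ℕ, Y(t) ≤ φ/(t+γ), where φ = max(α²ω/(αμ−1), γ·Y(0)). -/
/-- **Diminishing-stepsize recursion lemma** (the key induction in the proofs of Theorems 3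
and 4): let `μ > 0`, `α > 1/μ`, `γ ≥ αμ`, `ω ≥ 0`, and let `Y : ℕ → ℝ` satisfy
`Y (t+1) ≤ (1 − αμ/(t+γ))·Y t + α²ω/(t+γ)²` for all `t`. Then `Y t ≤ φ/(t+γ)` for all `t`,
where `φ = max (α²ω/(αμ−1)) (γ·Y 0)`. -/
theorem diminishing_stepsize_recursion
    (μ α γ ω : ℝ) (hμ : 0 < μ) (hα : 1 / μ < α) (hγ : α * μ ≤ γ) (hω : 0 ≤ ω)
    (Y : ℕ → ℝ)
    (hrec : ∀ t : ℕ,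
      Y (t + 1) ≤ (1 - α * μ / ((t : ℝ) + γ)) * Y t + α ^ 2 * ω / ((t : ℝ) + γ) ^ 2) :
    ∀ t : ℕ, Y t ≤ max (α ^ 2 * ω / (α * μ - 1)) (γ * Y 0) / ((t : ℝ) + γ) := by
  have hαμ : 1 < α * μ := by
    rw [div_lt_iff₀ hμ] at hα; linarith
  have hγ0 : 0 < γ := lt_of_lt_of_le (by linarith) hγ
  set φ : ℝ := max (α ^ 2 * ω / (α * μ - 1)) (γ * Y 0) with hφ
  have hφ1 : α ^ 2 * ω / (α * μ - 1) ≤ φ := le_max_left _ _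
  have hφ0 : 0 ≤ φ := le_trans (div_nonneg (by positivity) (by linarith)) hφ1
  have hkey : α ^ 2 * ω ≤ (α * μ - 1) * φ := by
    rw [div_le_iff₀ (by linarith : (0:ℝ) < α * μ - 1)] at hφ1
    linarith [hφ1]
  intro t
  induction t with
  | zero =>
    simp only [Nat.cast_zero, zero_add]
    rw [le_div_iff₀ hγ0]
    calc Y 0 * γ = γ * Y 0 := by ring
    _ ≤ φ := le_max_right _ _
  | succ t ih =>
    have hτ : (0:ℝ) < (t : ℝ) + γ := by positivity
    have hτμ : α * μ ≤ (t : ℝ) + γ := le_trans hγ (by have := (Nat.cast_nonneg t : (0:ℝ) ≤ t); linarith)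
    have hc : 0 ≤ 1 - α * μ / ((t : ℝ) + γ) := by
      rw [sub_nonneg, div_le_one hτ]; exact hτμ
    have h1 : Y (t + 1) ≤ (1 - α * μ / ((t : ℝ) + γ)) * (φ / ((t : ℝ) + γ))
        + α ^ 2 * ω / ((t : ℝ) + γ) ^ 2 :=
      le_trans (hrec t) (by gcongr)
    refine le_trans h1 ?_
    have hτ1 : (0:ℝ) < (t : ℝ) + 1 + γ := by positivity
    push_cast
    have e1 : (1 - α * μ / ((t : ℝ) + γ)) * (φ / ((t : ℝ) + γ))
        + α ^ 2 * ω / ((t : ℝ) + γ) ^ 2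
        = ((((t : ℝ) + γ) - α * μ) * φ + α ^ 2 * ω) / ((t : ℝ) + γ) ^ 2 := by
      field_simp
    rw [e1, div_le_div_iff₀ (by positivity) hτ1]
    nlinarith [mul_nonneg hφ0 hτ.le, hkey, hφ0]
end

section
/- Theorem 3 (convergence rate of FedSGD-DPC with the Laplace mechanism): let λ ≥ μ > 0, γ = 2λ/μ, η_t = (2/μ)/(t+γ), and set ω₀ = 2·((N−b)/(N−1))·(G²/b) + 2λΓ and ω₁ = (32·p·b·T²·ξ₁²/(N·d²))·∑_{i=1}^N 1/ε_i², where N ≥ 2, 1 ≤ b ≤ N, T, p ≥ 1 are integers, G, ξ₁, d > 0, Γ ≥ 0, and ε_i > 0 for each i. If Y : ℕ → ℝ satisfies Y(0) ≥ 0 and the per-iteration bound Y(t+1) ≤ (1 − μη_t)·Y(t) + η_t²·(ω₀ + ω₁/4) for every t (as derived from Lemmas 1–3 and Proposition 1), then for every t ∈ ℕ, Y(t) ≤ (1/(t+γ))·((4/μ²)·ω₀ + γ·Y(0)) + (1/(μ²·(t+γ)))·ω₁. -/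
lemma fedSGD_aux (μ γ C : ℝ) (hμ : 0 < μ) (hγ2 : 2 ≤ γ) (hC : 0 ≤ C)
    (Y : ℕ → ℝ) (hY0 : 0 ≤ Y 0)
    (hrec : ∀ t : ℕ, Y (t + 1) ≤ (1 - 2 / ((t : ℝ) + γ)) * Y t
      + (2 / (μ * ((t : ℝ) + γ))) ^ 2 * C) :
    ∀ t : ℕ, Y t ≤ ((4 / μ ^ 2) * C + γ * Y 0) / ((t : ℝ) + γ) := by
  have hv : 0 ≤ (4 / μ ^ 2) * C + γ * Y 0 := by
    have h1 : 0 ≤ (4 / μ ^ 2) * C := by positivity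
    have h2 : 0 ≤ γ * Y 0 := mul_nonneg (by linarith) hY0
    linarith
  intro t
  induction t with
  | zero =>
    simp only [Nat.cast_zero, zero_add]
    rw [le_div_iff₀ (by linarith : (0:ℝ) < γ)]
    have h1 : 0 ≤ (4 / μ ^ 2) * C := by positivity
    linarith
  | succ n ih =>
    have hx : (2:ℝ) ≤ (n : ℝ) + γ := by
      have : (0:ℝ) ≤ (n:ℝ) := Nat.cast_nonneg n
      linarith
    set x : ℝ := (n : ℝ) + γ with hxdef
    have hx0 : (0:ℝ) < x := by linarith
    have h2 : (0:ℝ) ≤ 1 - 2 / x := by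
      rw [sub_nonneg, div_le_one hx0]; linarith
    have h3 : Y (n + 1) ≤ (1 - 2 / x) * (((4 / μ ^ 2) * C + γ * Y 0) / x)
        + (2 / (μ * x)) ^ 2 * C := by
      calc Y (n + 1) ≤ (1 - 2 / x) * Y n + (2 / (μ * x)) ^ 2 * C := hrec n
        _ ≤ _ := by gcongr
    have hcast : ((n + 1 : ℕ) : ℝ) + γ = x + 1 := by
      push_cast; rw [hxdef]; ring
    rw [hcast]
    have h4 : (1 - 2 / x) * (((4 / μ ^ 2) * C + γ * Y 0) / x) + (2 / (μ * x)) ^ 2 * C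
        ≤ ((4 / μ ^ 2) * C + γ * Y 0) / (x + 1) := by
      have hμ2 : (0:ℝ) < μ ^ 2 := by positivity
      rw [show (1 - 2 / x) * (((4 / μ ^ 2) * C + γ * Y 0) / x) + (2 / (μ * x)) ^ 2 * C
          = ((x - 2) * ((4 / μ ^ 2) * C + γ * Y 0) + (4 / μ ^ 2) * C) / x ^ 2 by
        field_simp; try ring]
      rw [div_le_div_iff₀ (by positivity) (by linarith)]
      have hY0γ : 0 ≤ γ * Y 0 := mul_nonneg (by linarith) hY0
      nlinarith [mul_nonneg (mul_nonneg (by positivity : (0:ℝ) ≤ 4 / μ ^ 2) hC) hx0.le,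
        mul_nonneg hY0γ hx0.le]
    linarith

/-- **Theorem 3 (convergence rate of FedSGD-DPC with the Laplace mechanism):** with
`λ ≥ μ > 0`, `γ = 2λ/μ`, `η_t = (2/μ)/(t+γ)`,
`ω₀ = 2((N−b)/(N−1))(G²/b) + 2λΓ` and `ω₁ = (32 p b T² ξ₁²/(N d²)) ∑ i, 1/ε_i²`,
if `Y 0 ≥ 0` and `Y (t+1) ≤ (1 − μ η_t) Y t + η_t² (ω₀ + ω₁/4)` for every `t`, then
`Y t ≤ (1/(t+γ))((4/μ²)ω₀ + γ Y 0) + (1/(μ²(t+γ))) ω₁` for every `t`. -/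
theorem fedSGD_DPC_laplace_convergence
    (N b T p : ℕ) (hN : 2 ≤ N) (hb1 : 1 ≤ b) (hbN : b ≤ N) (hT : 1 ≤ T) (hp : 1 ≤ p)
    (G ξ₁ d lam μ Γ : ℝ) (hG : 0 < G) (hξ₁ : 0 < ξ₁) (hd : 0 < d)
    (hμ : 0 < μ) (hμlam : μ ≤ lam) (hΓ : 0 ≤ Γ)
    (ε : Fin N → ℝ) (hε : ∀ i, 0 < ε i)
    (γ : ℝ) (hγ : γ = 2 * lam / μ)
    (η : ℕ → ℝ) (hη : ∀ t : ℕ, η t = (2 / μ) / ((t : ℝ) + γ))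
    (ω₀ ω₁ : ℝ)
    (hω₀ : ω₀ = 2 * (((N : ℝ) - (b : ℝ)) / ((N : ℝ) - 1)) * (G ^ 2 / (b : ℝ)) + 2 * lam * Γ)
    (hω₁ : ω₁ = 32 * (p : ℝ) * (b : ℝ) * (T : ℝ) ^ 2 * ξ₁ ^ 2 / ((N : ℝ) * d ^ 2) *
      ∑ i, 1 / (ε i) ^ 2)
    (Y : ℕ → ℝ) (hY0 : 0 ≤ Y 0)
    (hrec : ∀ t : ℕ, Y (t + 1) ≤ (1 - μ * η t) * Y t + (η t) ^ 2 * (ω₀ + ω₁ / 4)) :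
    ∀ t : ℕ, Y t ≤ (1 / ((t : ℝ) + γ)) * ((4 / μ ^ 2) * ω₀ + γ * Y 0)
      + (1 / (μ ^ 2 * ((t : ℝ) + γ))) * ω₁ := by
  have hγ2 : (2:ℝ) ≤ γ := by
    rw [hγ, le_div_iff₀ hμ]; nlinarith
  have hω₀' : 0 ≤ ω₀ := by
    have h1 : (0:ℝ) ≤ ((N : ℝ) - (b : ℝ)) / ((N : ℝ) - 1) := by
      apply div_nonneg
      · have : (b:ℝ) ≤ (N:ℝ) := by exact_mod_cast hbN
        linarith
      · have : (2:ℝ) ≤ (N:ℝ) := by exact_mod_cast hN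
        linarith
    have h2 : (0:ℝ) ≤ G ^ 2 / (b : ℝ) := by positivity
    nlinarith
  have hω₁' : 0 ≤ ω₁ := by
    rw [hω₁]
    apply mul_nonneg (by positivity)
    apply Finset.sum_nonneg
    intro i _
    have := hε i
    positivity
  have hC : 0 ≤ ω₀ + ω₁ / 4 := by linarith
  have hrec' : ∀ t : ℕ, Y (t + 1) ≤ (1 - 2 / ((t : ℝ) + γ)) * Y t
      + (2 / (μ * ((t : ℝ) + γ))) ^ 2 * (ω₀ + ω₁ / 4) := by
    intro t
    have hx0 : (0:ℝ) < (t : ℝ) + γ := by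
      have : (0:ℝ) ≤ (t:ℝ) := Nat.cast_nonneg t
      linarith
    have h1 : μ * η t = 2 / ((t : ℝ) + γ) := by
      rw [hη t]; field_simp; try ring
    have h2 : η t = 2 / (μ * ((t : ℝ) + γ)) := by
      rw [hη t]; field_simp; try ring
    calc Y (t + 1) ≤ (1 - μ * η t) * Y t + (η t) ^ 2 * (ω₀ + ω₁ / 4) := hrec t
      _ = _ := by rw [h1, h2]
  have key := fedSGD_aux μ γ (ω₀ + ω₁ / 4) hμ hγ2 hC Y hY0 hrec'
  intro t
  have ht : (0:ℝ) < (t : ℝ) + γ := by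
    have : (0:ℝ) ≤ (t:ℝ) := Nat.cast_nonneg t
    linarith
  calc Y t ≤ ((4 / μ ^ 2) * (ω₀ + ω₁ / 4) + γ * Y 0) / ((t : ℝ) + γ) := key t
    _ = (1 / ((t : ℝ) + γ)) * ((4 / μ ^ 2) * ω₀ + γ * Y 0)
        + (1 / (μ ^ 2 * ((t : ℝ) + γ))) * ω₁ := by
        field_simp
        ring
end

section
/- Proposition 1 (variance of aggregated Laplace noises in FedSGD-DPC): under the noise model below, the average over all C(N,b) b-element subsets P ⊆ S of the expected squared norm of the aggregated noise w^b_P = (N·η/(b·d))·∑_{i∈P} d_i·w_i equals (1/C(N,b)) · ∑_{P ⊆ S, |P| = b} E‖w^b_P‖² = (8·η²·p·b·T²·ξ₁²/(N·d²)) · ∑_{i∈S} 1/ε_i². -/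
open MeasureTheory ProbabilityTheory

section AuxLemmas

variable {Ω : Type*} [MeasurableSpace Ω] {P : Measure Ω} [IsProbabilityMeasure P]
  {ι : Type*} {p : ℕ}

omit [IsProbabilityMeasure P] in
lemma aux_norm_sq_sum' : True := trivial

set_option linter.unusedSectionVars false in
lemma aux_norm_sq_sum (c : ι → ℝ) (w : ι → Ω → EuclideanSpace ℝ (Fin p))
    (hindep : iIndepFun w P)
    (hmz : ∀ i, ∫ ω, w i ω ∂P = 0) (hL2 : ∀ i, MemLp (w i) 2 P) (Q : Finset ι) :
    ∫ ω, ‖∑ i ∈ Q, c i • w i ω‖ ^ 2 ∂P = ∑ i ∈ Q, (c i) ^ 2 * ∫ ω, ‖w i ω‖ ^ 2 ∂P := by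
  classical
  set X : Fin p → ι → Ω → ℝ := fun k i ω => c i * (w i ω k) with hX
  have hXmeas : ∀ k i, Measurable fun v : EuclideanSpace ℝ (Fin p) => c i * v k :=
    fun k i => measurable_const.mul ((measurable_pi_apply k).comp (WithLp.measurable_ofLp _ _))
  have hXindep : ∀ k, iIndepFun (fun i => X k i) P := by
    intro k
    exact hindep.comp (fun i (v : EuclideanSpace ℝ (Fin p)) => c i * v k) (hXmeas k)
  have hXL2 : ∀ k i, MemLp (X k i) 2 P := by
    intro k i
    have := ((c i) • (EuclideanSpace.proj (𝕜 := ℝ) k)).comp_memLp' (hL2 i)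
    convert this using 1
    funext ω
    simp [X]
  have hXmean : ∀ k i, ∫ ω, X k i ω ∂P = 0 := by
    intro k i
    have hint : Integrable (w i) P := (hL2 i).integrable one_le_two
    have := ((c i) • (EuclideanSpace.proj (𝕜 := ℝ) k)).integral_comp_comm hint
    simpa [X, Function.comp, hmz i] using this
  have hvar : ∀ k i, variance (X k i) P = ∫ ω, (X k i ω) ^ 2 ∂P := by
    intro k i
    rw [variance_eq_sub (hXL2 k i), hXmean k i]
    simp
  have hsum : ∀ k, ∫ ω, (∑ i ∈ Q, X k i ω) ^ 2 ∂P = ∑ i ∈ Q, ∫ ω, (X k i ω) ^ 2 ∂P := by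
    intro k
    have h1 : variance (∑ i ∈ Q, X k i) P = ∑ i ∈ Q, variance (X k i) P :=
      IndepFun.variance_sum (fun i _ => hXL2 k i)
        (fun i _ j _ hij => (hXindep k).indepFun hij)
    have h2 : variance (∑ i ∈ Q, X k i) P = ∫ ω, (∑ i ∈ Q, X k i ω) ^ 2 ∂P := by
      rw [variance_eq_sub (memLp_finset_sum' _ fun i _ => hXL2 k i)]
      have hz : ∫ ω, ∑ i ∈ Q, X k i ω ∂P = 0 := by
        rw [integral_finset_sum _ fun i _ => ((hXL2 k i).integrable one_le_two)]
        simp [hXmean k]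
      simp only [Pi.pow_apply, Finset.sum_apply]
      rw [hz]
      ring
    rw [← h2, h1]
    simp [hvar]
  -- norm squared as sum over coordinates
  have hnorm : ∀ v : EuclideanSpace ℝ (Fin p), ‖v‖ ^ 2 = ∑ k, (v k) ^ 2 := by
    intro v
    rw [EuclideanSpace.norm_eq, Real.sq_sqrt (by positivity)]
    simp [Real.norm_eq_abs, sq_abs]
  calc ∫ ω, ‖∑ i ∈ Q, c i • w i ω‖ ^ 2 ∂P
      = ∫ ω, ∑ k, (∑ i ∈ Q, X k i ω) ^ 2 ∂P := by
        refine integral_congr_ae (Filter.Eventually.of_forall fun ω => ?_)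
        show ‖∑ i ∈ Q, c i • w i ω‖ ^ 2 = ∑ k, (∑ i ∈ Q, X k i ω) ^ 2
        rw [hnorm]
        refine Finset.sum_congr rfl fun k _ => ?_
        have h' := map_sum (EuclideanSpace.proj (𝕜 := ℝ) k) (fun i => c i • w i ω) Q
        simp only [X]
        have hpr : ∀ v : EuclideanSpace ℝ (Fin p), EuclideanSpace.proj (𝕜 := ℝ) k v = v k :=
          fun v => rfl
        simp only [hpr, _root_.map_smul, smul_eq_mul] at h'
        rw [h']
        simp only [PiLp.smul_apply, smul_eq_mul]
    _ = ∑ k, ∫ ω, (∑ i ∈ Q, X k i ω) ^ 2 ∂P := by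
        refine integral_finset_sum _ fun k _ => ?_
        have := (memLp_finset_sum' Q fun i _ => hXL2 k i).integrable_sq
        refine this.congr (Filter.Eventually.of_forall fun ω => ?_)
        simp [Finset.sum_apply]
    _ = ∑ k, ∑ i ∈ Q, ∫ ω, (X k i ω) ^ 2 ∂P := by simp [hsum]
    _ = ∑ i ∈ Q, ∑ k, ∫ ω, (X k i ω) ^ 2 ∂P := Finset.sum_comm
    _ = ∑ i ∈ Q, (c i) ^ 2 * ∫ ω, ‖w i ω‖ ^ 2 ∂P := by
        refine Finset.sum_congr rfl fun i _ => ?_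
        have : ∀ k, ∫ ω, (X k i ω) ^ 2 ∂P = (c i) ^ 2 * ∫ ω, (w i ω k) ^ 2 ∂P := by
          intro k
          simp only [X, mul_pow]
          exact integral_const_mul _ _
        rw [Finset.sum_congr rfl fun k _ => this k, ← Finset.mul_sum]
        congr 1
        have hcoord : ∀ k : Fin p, Integrable (fun ω => (w i ω k) ^ 2) P := by
          intro k
          have := ((EuclideanSpace.proj (𝕜 := ℝ) k).comp_memLp' (hL2 i)).integrable_sq
          simpa [Function.comp] using this
        rw [← integral_finset_sum _ fun k _ => hcoord k]
        refine integral_congr_ae (Filter.Eventually.of_forall fun ω => ?_)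
        exact (hnorm (w i ω)).symm

lemma aux_count [Fintype ι] [DecidableEq ι] (b : ℕ) (hb : 1 ≤ b) (i : ι) :
    ((Finset.powersetCard b (Finset.univ : Finset ι)).filter (fun Q => i ∈ Q)).card
      = (Fintype.card ι - 1).choose (b - 1) := by
  classical
  have hcard : (Finset.univ.erase i).card = Fintype.card ι - 1 := by
    rw [Finset.card_erase_of_mem (Finset.mem_univ i), Finset.card_univ]
  rw [← hcard, ← Finset.card_powersetCard (b - 1) (Finset.univ.erase i)]
  apply Finset.card_bij (fun Q _ => Q.erase i)
  · intro Q hQ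
    simp only [Finset.mem_filter, Finset.mem_powersetCard] at hQ
    obtain ⟨⟨hsub, hcardQ⟩, hiQ⟩ := hQ
    rw [Finset.mem_powersetCard]
    exact ⟨Finset.erase_subset_erase i hsub, by rw [Finset.card_erase_of_mem hiQ, hcardQ]⟩
  · intro Q1 hQ1 Q2 hQ2 h
    simp only [Finset.mem_filter] at hQ1 hQ2
    rw [← Finset.insert_erase hQ1.2, ← Finset.insert_erase hQ2.2, h]
  · intro R hR
    rw [Finset.mem_powersetCard] at hR
    obtain ⟨hsub, hcardR⟩ := hR
    have hiR : i ∉ R := fun h => (Finset.mem_erase.1 (hsub h)).1 rfl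
    refine ⟨insert i R, ?_, ?_⟩
    · simp only [Finset.mem_filter, Finset.mem_powersetCard]
      refine ⟨⟨Finset.subset_univ _, ?_⟩, Finset.mem_insert_self i R⟩
      rw [Finset.card_insert_of_notMem hiR, hcardR]
      omega
    · rw [Finset.erase_insert hiR]

end AuxLemmas

/-- **Proposition 1 (variance of aggregated Laplace noises in FedSGD-DPC):** with mutually
independent zero-mean noises `w i : Ω → ℝ^p` of second moment
`E‖w i‖² = 8 p b² T² ξ₁² / (N² d_i² ε_i²)`, the average over all `C(N,b)` subsets `P` of size
`b` of `E‖(Nη/(bd)) • ∑_{i∈P} d_i • w i‖²` equals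
`(8 η² p b T² ξ₁² / (N d²)) ∑_{i∈S} 1/ε_i²`, where `d = ∑ i, d_i`. -/
theorem variance_aggregated_laplace_noise
    {Ω : Type*} [MeasurableSpace Ω] (P : Measure Ω) [IsProbabilityMeasure P]
    {ι : Type*} [Fintype ι] [DecidableEq ι] (p N b T : ℕ)
    (hp : 1 ≤ p) (hcard : Fintype.card ι = N) (hb1 : 1 ≤ b) (hbN : b ≤ N) (hT : 1 ≤ T)
    (di : ι → ℝ) (hdi : ∀ i, 0 < di i)
    (ε : ι → ℝ) (hε : ∀ i, 0 < ε i)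
    (ξ₁ η : ℝ) (hξ₁ : 0 < ξ₁) (hη : 0 < η)
    (d : ℝ) (hd : d = ∑ i : ι, di i)
    (w : ι → Ω → EuclideanSpace ℝ (Fin p))
    (hindep : iIndepFun w P)
    (hmeanzero : ∀ i, ∫ ω, w i ω ∂P = 0)
    (hL2 : ∀ i, MemLp (w i) 2 P)
    (hvar : ∀ i, ∫ ω, ‖w i ω‖ ^ 2 ∂P
      = 8 * (p : ℝ) * (b : ℝ) ^ 2 * (T : ℝ) ^ 2 * ξ₁ ^ 2
        / ((N : ℝ) ^ 2 * (di i) ^ 2 * (ε i) ^ 2)) :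
    ((N.choose b : ℝ))⁻¹ *
      ∑ Q ∈ Finset.powersetCard b (Finset.univ : Finset ι),
        ∫ ω, ‖((N : ℝ) * η / ((b : ℝ) * d)) • ∑ i ∈ Q, di i • w i ω‖ ^ 2 ∂P
    = 8 * η ^ 2 * (p : ℝ) * (b : ℝ) * (T : ℝ) ^ 2 * ξ₁ ^ 2 / ((N : ℝ) * d ^ 2) *
        ∑ i : ι, 1 / (ε i) ^ 2 := by
  classical
  set c : ℝ := (N : ℝ) * η / ((b : ℝ) * d) with hc
  set K : ℝ := 8 * (p : ℝ) * (b : ℝ) ^ 2 * (T : ℝ) ^ 2 * ξ₁ ^ 2 / (N : ℝ) ^ 2 with hK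
  have hN1 : 1 ≤ N := le_trans hb1 hbN
  -- step 1: value for a single Q
  have hQval : ∀ Q ∈ Finset.powersetCard b (Finset.univ : Finset ι),
      ∫ ω, ‖c • ∑ i ∈ Q, di i • w i ω‖ ^ 2 ∂P
        = c ^ 2 * ∑ i ∈ Q, K / (ε i) ^ 2 := by
    intro Q _
    have h1 : ∀ ω, ‖c • ∑ i ∈ Q, di i • w i ω‖ ^ 2
        = c ^ 2 * ‖∑ i ∈ Q, di i • w i ω‖ ^ 2 := by
      intro ω
      rw [norm_smul, mul_pow, Real.norm_eq_abs, sq_abs]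
    simp only [h1]
    rw [integral_const_mul, aux_norm_sq_sum di w hindep hmeanzero hL2 Q]
    congr 1
    refine Finset.sum_congr rfl fun i _ => ?_
    rw [hvar i, hK]
    have h2 : di i ≠ 0 := (hdi i).ne'
    have h3 : ε i ≠ 0 := (hε i).ne'
    have h4 : (N : ℝ) ≠ 0 := Nat.cast_ne_zero.2 (by omega)
    field_simp
  rw [Finset.sum_congr rfl hQval]
  -- step 2: swap sums
  have hswap : ∑ Q ∈ Finset.powersetCard b (Finset.univ : Finset ι),
      c ^ 2 * ∑ i ∈ Q, K / (ε i) ^ 2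
      = c ^ 2 * (((N - 1).choose (b - 1) : ℝ) * ∑ i : ι, K / (ε i) ^ 2) := by
    rw [← Finset.mul_sum]
    congr 1
    calc ∑ Q ∈ Finset.powersetCard b (Finset.univ : Finset ι), ∑ i ∈ Q, K / (ε i) ^ 2
        = ∑ Q ∈ Finset.powersetCard b (Finset.univ : Finset ι),
            ∑ i : ι, if i ∈ Q then K / (ε i) ^ 2 else 0 := by
          refine Finset.sum_congr rfl fun Q _ => ?_
          rw [Finset.sum_ite_mem, Finset.univ_inter]
      _ = ∑ i : ι, ∑ Q ∈ Finset.powersetCard b (Finset.univ : Finset ι),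
            if i ∈ Q then K / (ε i) ^ 2 else 0 := Finset.sum_comm
      _ = ∑ i : ι, (((Finset.powersetCard b (Finset.univ : Finset ι)).filter
            (fun Q => i ∈ Q)).card : ℝ) * (K / (ε i) ^ 2) := by
          refine Finset.sum_congr rfl fun i _ => ?_
          rw [Finset.sum_ite, Finset.sum_const_zero, add_zero, Finset.sum_const,
            nsmul_eq_mul]
      _ = ((N - 1).choose (b - 1) : ℝ) * ∑ i : ι, K / (ε i) ^ 2 := by
          rw [Finset.mul_sum]
          refine Finset.sum_congr rfl fun i _ => ?_
          rw [aux_count b hb1 i, hcard]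
  rw [hswap]
  -- step 3: arithmetic
  have hdpos : 0 < d := by
    rw [hd]
    have : Nonempty ι := Fintype.card_pos_iff.mp (by omega)
    exact Finset.sum_pos (fun i _ => hdi i) Finset.univ_nonempty
  have hchoose : ((N.choose b : ℝ)) * b = (N : ℝ) * ((N - 1).choose (b - 1)) := by
    have := Nat.add_one_mul_choose_eq (N - 1) (b - 1)
    have hN' : N - 1 + 1 = N := by omega
    have hb' : b - 1 + 1 = b := by omega
    rw [hN', hb'] at this
    exact_mod_cast (congrArg (fun n : ℕ => (n : ℝ)) this).symm
  have hchoosepos : 0 < (N.choose b : ℝ) := by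
    exact_mod_cast Nat.choose_pos hbN
  have hbpos : (0 : ℝ) < b := by exact_mod_cast hb1
  have hNpos : (0 : ℝ) < N := by exact_mod_cast hN1
  have hεsum : ∑ i : ι, K / (ε i) ^ 2 = K * ∑ i : ι, 1 / (ε i) ^ 2 := by
    rw [Finset.mul_sum]
    exact Finset.sum_congr rfl fun i _ => by rw [mul_one_div]
  rw [hεsum, hc, hK]
  have h1 : ((N - 1).choose (b - 1) : ℝ) = (N.choose b : ℝ) * b / N := by
    field_simp
    linarith [hchoose]
  rw [h1]
  field_simp
end

section
/- Proposition 2 (variance of aggregated Gaussian noises in FedSGD-DPC): under the noise model below, the average over all C(N,b) b-element subsets P ⊆ S of the expected squared norm of the aggregated noise w^b_P = (N·η/(b·d))·∑_{i∈P} d_i·w_i equals (1/C(N,b)) · ∑_{P ⊆ S, |P| = b} E‖w^b_P‖² = (c₂²·η²·p·T·ξ₂²/d²) · ∑_{i∈S} (1/ε_i²)·log(1/δ_i). -/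
open MeasureTheory ProbabilityTheory

section Aux

variable {Ω : Type*} [MeasurableSpace Ω] {P : Measure Ω} [IsProbabilityMeasure P]

private theorem aux_inner_integrable {E : Type*} [NormedAddCommGroup E]
    [InnerProductSpace ℝ E] {f g : Ω → E} (hf : MemLp f 2 P) (hg : MemLp g 2 P) :
    Integrable (fun ω => (inner ℝ (f ω) (g ω) : ℝ)) P := by
  have h := L2.integrable_inner (𝕜 := ℝ) (hf.toLp f) (hg.toLp g)
  refine h.congr ?_
  filter_upwards [hf.coeFn_toLp, hg.coeFn_toLp] with ω h1 h2
  simp [h1, h2]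

private theorem aux_indep_inner_zero {p : ℕ} {f g : Ω → EuclideanSpace ℝ (Fin p)}
    (hfg : IndepFun f g P) (hf : MemLp f 2 P) (hg : MemLp g 2 P)
    (hf0 : ∫ ω, f ω ∂P = 0) :
    ∫ ω, (inner ℝ (f ω) (g ω) : ℝ) ∂P = 0 := by
  have hcoord : ∀ (k : Fin p) (h : Ω → EuclideanSpace ℝ (Fin p)), MemLp h 2 P →
      MemLp (fun ω => h ω k) 2 P := by
    intro k h hh
    exact (EuclideanSpace.proj k : EuclideanSpace ℝ (Fin p) →L[ℝ] ℝ).comp_memLp' hh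
  have hint : ∀ k : Fin p, Integrable (fun ω => f ω k * g ω k) P := by
    intro k
    have := aux_inner_integrable (E := ℝ) (hcoord k f hf) (hcoord k g hg)
    simpa [RCLike.inner_apply, mul_comm] using this
  have : (fun ω => (inner ℝ (f ω) (g ω) : ℝ)) = fun ω => ∑ k : Fin p, f ω k * g ω k := by
    funext ω
    simp [PiLp.inner_apply, RCLike.inner_apply, mul_comm]
  rw [this, integral_finset_sum _ (fun k _ => hint k)]
  refine Finset.sum_eq_zero fun k _ => ?_
  have hik : IndepFun (fun ω => f ω k) (fun ω => g ω k) P :=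
    hfg.comp (EuclideanSpace.proj k : EuclideanSpace ℝ (Fin p) →L[ℝ] ℝ).continuous.measurable
      (EuclideanSpace.proj k : EuclideanSpace ℝ (Fin p) →L[ℝ] ℝ).continuous.measurable
  have hmul : ∫ ω, f ω k * g ω k ∂P = (∫ ω, f ω k ∂P) * ∫ ω, g ω k ∂P :=
    IndepFun.integral_fun_mul_eq_mul_integral hik ((hcoord k f hf).integrable one_le_two).aestronglyMeasurable
      ((hcoord k g hg).integrable one_le_two).aestronglyMeasurable
  rw [hmul]
  have hk : ∫ ω, f ω k ∂P = 0 := by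
    have := (EuclideanSpace.proj k : EuclideanSpace ℝ (Fin p) →L[ℝ] ℝ).integral_comp_comm
      (hf.integrable one_le_two)
    simp only [hf0, map_zero] at this
    simpa using this
  rw [hk, zero_mul]

private theorem aux_integral_norm_sq_sum {E : Type*} [NormedAddCommGroup E]
    [InnerProductSpace ℝ E]
    {ι : Type*} (s : Finset ι) (f : ι → Ω → E) (hf : ∀ i ∈ s, MemLp (f i) 2 P)
    (horth : ∀ i ∈ s, ∀ j ∈ s, i ≠ j → ∫ ω, (inner ℝ (f i ω) (f j ω) : ℝ) ∂P = 0) :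
    ∫ ω, ‖∑ i ∈ s, f i ω‖ ^ 2 ∂P = ∑ i ∈ s, ∫ ω, ‖f i ω‖ ^ 2 ∂P := by
  calc ∫ ω, ‖∑ i ∈ s, f i ω‖ ^ 2 ∂P
      = ∫ ω, ∑ i ∈ s, ∑ j ∈ s, (inner ℝ (f i ω) (f j ω) : ℝ) ∂P := by
        congr 1; funext ω
        rw [← real_inner_self_eq_norm_sq, sum_inner]
        exact Finset.sum_congr rfl fun i _ => inner_sum _ _ _
    _ = ∑ i ∈ s, ∑ j ∈ s, ∫ ω, (inner ℝ (f i ω) (f j ω) : ℝ) ∂P := by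
        rw [integral_finset_sum _ (fun i hi => integrable_finset_sum _
          (fun j hj => aux_inner_integrable (hf i hi) (hf j hj)))]
        exact Finset.sum_congr rfl fun i hi => integral_finset_sum _
          fun j hj => aux_inner_integrable (hf i hi) (hf j hj)
    _ = ∑ i ∈ s, ∫ ω, ‖f i ω‖ ^ 2 ∂P := by
        refine Finset.sum_congr rfl fun i hi => ?_
        rw [Finset.sum_eq_single_of_mem i hi (fun j hj hji => horth i hi j hj (Ne.symm hji))]
        congr 1; funext ω; rw [real_inner_self_eq_norm_sq]

private theorem aux_count_lemma {ι : Type*} [Fintype ι] [DecidableEq ι] {b : ℕ}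
    (hb : 1 ≤ b) (i : ι) :
    ((Finset.powersetCard b (Finset.univ : Finset ι)).filter (fun Q => i ∈ Q)).card
      = (Fintype.card ι - 1).choose (b - 1) := by
  have : ((Finset.powersetCard b (Finset.univ : Finset ι)).filter (fun Q => i ∈ Q)).card
      = (Finset.powersetCard (b - 1) ((Finset.univ : Finset ι).erase i)).card := by
    refine Finset.card_nbij' (fun Q => Q.erase i) (fun R => insert i R) ?_ ?_ ?_ ?_
    · intro Q hQ
      simp only [Finset.mem_coe, Finset.mem_filter, Finset.mem_powersetCard] at hQ
      simp only [Finset.mem_coe, Finset.mem_powersetCard]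
      refine ⟨fun x hx => ?_, ?_⟩
      · simp only [Finset.mem_erase] at hx ⊢
        exact ⟨hx.1, Finset.mem_univ _⟩
      · rw [Finset.card_erase_of_mem hQ.2, hQ.1.2]
    · intro R hR
      simp only [Finset.mem_coe, Finset.mem_powersetCard] at hR
      have hiR : i ∉ R := fun h => (Finset.mem_erase.mp (hR.1 h)).1 rfl
      simp only [Finset.mem_coe, Finset.mem_filter, Finset.mem_powersetCard]
      exact ⟨⟨Finset.subset_univ _, by rw [Finset.card_insert_of_notMem hiR, hR.2,
        Nat.sub_add_cancel hb]⟩, Finset.mem_insert_self _ _⟩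
    · intro Q hQ
      simp only [Finset.mem_coe, Finset.mem_filter] at hQ
      exact Finset.insert_erase hQ.2
    · intro R hR
      simp only [Finset.mem_coe, Finset.mem_powersetCard] at hR
      have hiR : i ∉ R := fun h => (Finset.mem_erase.mp (hR.1 h)).1 rfl
      exact Finset.erase_insert hiR
  rw [this, Finset.card_powersetCard, Finset.card_erase_of_mem (Finset.mem_univ i),
    Finset.card_univ]

end Aux

/-- **Proposition 2 (variance of aggregated Gaussian noises in FedSGD-DPC):** with mutually
independent zero-mean noises `w i : Ω → ℝ^p` of second moment `E‖w i‖² = p σ_i²` where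
`σ_i² = c₂² ξ₂² b T log(1/δ_i) / (N d_i² ε_i²)`, the average over all `C(N,b)` subsets `P`
of size `b` of `E‖(Nη/(bd)) • ∑_{i∈P} d_i • w i‖²` equals
`(c₂² η² p T ξ₂² / d²) ∑_{i∈S} (1/ε_i²) log(1/δ_i)`, where `d = ∑ i, d_i`. -/
theorem variance_aggregated_gaussian_noise
    {Ω : Type*} [MeasurableSpace Ω] (P : Measure Ω) [IsProbabilityMeasure P]
    {ι : Type*} [Fintype ι] [DecidableEq ι] (p N b T : ℕ)
    (hp : 1 ≤ p) (hcard : Fintype.card ι = N) (hb1 : 1 ≤ b) (hbN : b ≤ N) (hT : 1 ≤ T)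
    (di : ι → ℝ) (hdi : ∀ i, 0 < di i)
    (ε : ι → ℝ) (hε : ∀ i, 0 < ε i)
    (δ : ι → ℝ) (hδ0 : ∀ i, 0 < δ i) (hδ1 : ∀ i, δ i < 1)
    (ξ₂ c₂ η : ℝ) (hξ₂ : 0 < ξ₂) (hc₂ : 0 < c₂) (hη : 0 < η)
    (d : ℝ) (hd : d = ∑ i : ι, di i)
    (σsq : ι → ℝ)
    (hσ : ∀ i, σsq i = c₂ ^ 2 * ξ₂ ^ 2 * (b : ℝ) * (T : ℝ) * Real.log (1 / δ i)
      / ((N : ℝ) * (di i) ^ 2 * (ε i) ^ 2))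
    (w : ι → Ω → EuclideanSpace ℝ (Fin p))
    (hindep : iIndepFun w P)
    (hmeanzero : ∀ i, ∫ ω, w i ω ∂P = 0)
    (hL2 : ∀ i, MemLp (w i) 2 P)
    (hvar : ∀ i, ∫ ω, ‖w i ω‖ ^ 2 ∂P = (p : ℝ) * σsq i) :
    ((N.choose b : ℝ))⁻¹ *
      ∑ Q ∈ Finset.powersetCard b (Finset.univ : Finset ι),
        ∫ ω, ‖((N : ℝ) * η / ((b : ℝ) * d)) • ∑ i ∈ Q, di i • w i ω‖ ^ 2 ∂P
    = c₂ ^ 2 * η ^ 2 * (p : ℝ) * (T : ℝ) * ξ₂ ^ 2 / d ^ 2 *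
        ∑ i : ι, (1 / (ε i) ^ 2) * Real.log (1 / δ i) := by
  have hN1 : 1 ≤ N := le_trans hb1 hbN
  have hNpos : (0 : ℝ) < N := by exact_mod_cast lt_of_lt_of_le one_pos (by exact_mod_cast hN1)
  have hbpos : (0 : ℝ) < b := by exact_mod_cast hb1
  have hιne : Nonempty ι := Fintype.card_pos_iff.mp (by omega)
  have hdpos : 0 < d := by
    rw [hd]; exact Finset.sum_pos (fun i _ => hdi i) Finset.univ_nonempty
  set c : ℝ := (N : ℝ) * η / ((b : ℝ) * d) with hc
  set g : ι → ℝ := fun i => (di i) ^ 2 * ((p : ℝ) * σsq i) with hg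
  -- step 1: per-subset integral
  have hQ : ∀ Q ∈ Finset.powersetCard b (Finset.univ : Finset ι),
      ∫ ω, ‖c • ∑ i ∈ Q, di i • w i ω‖ ^ 2 ∂P = c ^ 2 * ∑ i ∈ Q, g i := by
    intro Q _
    have h1 : ∀ ω, ‖c • ∑ i ∈ Q, di i • w i ω‖ ^ 2
        = c ^ 2 * ‖∑ i ∈ Q, di i • w i ω‖ ^ 2 := by
      intro ω
      rw [norm_smul, mul_pow, Real.norm_eq_abs, sq_abs]
    simp_rw [h1]
    rw [integral_const_mul]
    congr 1
    have hsum : ∫ ω, ‖∑ i ∈ Q, di i • w i ω‖ ^ 2 ∂P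
        = ∑ i ∈ Q, ∫ ω, ‖di i • w i ω‖ ^ 2 ∂P := by
      refine aux_integral_norm_sq_sum Q (fun i ω => di i • w i ω)
        (fun i _ => (hL2 i).const_smul (di i)) ?_
      intro i _ j _ hij
      have h2 : ∀ ω, (inner ℝ (di i • w i ω) (di j • w j ω) : ℝ)
          = di i * di j * (inner ℝ (w i ω) (w j ω) : ℝ) := by
        intro ω
        rw [real_inner_smul_left, real_inner_smul_right]; ring
      simp_rw [h2]
      rw [integral_const_mul,
        aux_indep_inner_zero (hindep.indepFun hij) (hL2 i) (hL2 j) (hmeanzero i), mul_zero]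
    rw [hsum]
    refine Finset.sum_congr rfl fun i _ => ?_
    have h3 : ∀ ω, ‖di i • w i ω‖ ^ 2 = (di i) ^ 2 * ‖w i ω‖ ^ 2 := by
      intro ω
      rw [norm_smul, mul_pow, Real.norm_eq_abs, sq_abs]
    simp_rw [h3]
    rw [integral_const_mul, hvar i]
  rw [Finset.sum_congr rfl hQ]
  -- step 2: combinatorial swap
  have hswap : ∑ Q ∈ Finset.powersetCard b (Finset.univ : Finset ι), c ^ 2 * ∑ i ∈ Q, g i
      = c ^ 2 * ∑ i : ι, ((N - 1).choose (b - 1) : ℝ) * g i := by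
    rw [← Finset.mul_sum]
    congr 1
    have h4 : ∀ Q ∈ Finset.powersetCard b (Finset.univ : Finset ι),
        ∑ i ∈ Q, g i = ∑ i : ι, if i ∈ Q then g i else 0 := by
      intro Q _
      rw [Finset.sum_ite_mem, Finset.univ_inter]
    rw [Finset.sum_congr rfl h4, Finset.sum_comm]
    refine Finset.sum_congr rfl fun i _ => ?_
    rw [← Finset.sum_filter, Finset.sum_const, aux_count_lemma hb1 i, hcard, nsmul_eq_mul]
  rw [hswap]
  -- step 3: algebra
  have hchoose : ((N : ℝ)) * ((N - 1).choose (b - 1) : ℝ) = (N.choose b : ℝ) * b := by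
    have := Nat.add_one_mul_choose_eq (N - 1) (b - 1)
    rw [Nat.sub_add_cancel hN1, Nat.sub_add_cancel hb1] at this
    exact_mod_cast this
  have hcnt : (((N - 1).choose (b - 1) : ℝ)) = (N.choose b : ℝ) * b / N := by
    field_simp
    linarith [hchoose]
  have hchoosene : ((N.choose b : ℝ)) ≠ 0 := (Nat.cast_pos.mpr (Nat.choose_pos hbN)).ne'
  rw [hcnt, Finset.mul_sum, Finset.mul_sum, Finset.mul_sum]
  refine Finset.sum_congr rfl fun i _ => ?_
  simp only [hg, hσ i, hc]
  have hdine : di i ≠ 0 := (hdi i).ne'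
  have hεne : ε i ≠ 0 := (hε i).ne'
  field_simp
end
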